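/- arXiv:2205.12349 — 5 statements merged into one kernel-verified Lean document; each statement's English description precedes it below -/
import Mathlib

section
/- For the filter function μ(λ) = β(λ) + iγ(λ) with ω > 0, T = 2π/ω, if |λ − ω|/ω ≤ 1/2 then |μ(λ)| ≤ 1 − (15/32)((λ − ω)/ω)². -/
/-!
Write `μ(λ) = (2/T) ∫₀ᵀ (cos ωt - 1/4) e^{iλt} dt` and expand `cos ωt` into exponentials. Since
`ωT = 2π`, the three exponentials `e^{i(λ±ω)T}`, `e^{iλT}` agree, so for `λ = ω(1+u)`, `u ≠ 0`,
`|μ(λ)| = (3(1+u)² + 1) |sin πu| / (2π |u| (1+u)(2+u))`, while `μ(ω) = 1`. The half-angle bound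
`sin x ≤ x cos (x/2) ≤ x (1 - x²/8 + 5x⁴/1536)` gives `|sin πu| ≤ π |u| (1 - 9u²/8)` for
`|u| ≤ 1/2`, and since `3(1+u)² + 1 = 2(1+u)(2+u) + u²` this is more than enough.
-/

open Real intervalIntegral
open Complex (I)

lemma sin_le_mul_cos_half {x : ℝ} (h0 : 0 ≤ x) (hπ : x ≤ π) : sin x ≤ x * cos (x / 2) := by
  have hcos : 0 ≤ cos (x / 2) := cos_nonneg_of_mem_Icc ⟨by linarith [pi_pos], by linarith⟩
  calc sin x = 2 * sin (x / 2) * cos (x / 2) := by rw [← sin_two_mul]; ring_nf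
    _ ≤ 2 * (x / 2) * cos (x / 2) := by gcongr; exact sin_le (by linarith)
    _ = x * cos (x / 2) := by ring

lemma abs_sin_pi_mul_le {u : ℝ} (hu : |u| ≤ 1 / 2) :
    |sin (π * u)| ≤ π * |u| * (1 - 9 / 8 * u ^ 2) := by
  wlog h0 : 0 ≤ u generalizing u
  · simpa [mul_neg, sin_neg, abs_neg] using this (u := -u) (by simpa using hu) (by linarith)
  rw [abs_of_nonneg h0] at hu ⊢
  have hπ := pi_gt_d2
  have hπ' := pi_lt_d2
  have hsin : 0 ≤ sin (π * u) := sin_nonneg_of_nonneg_of_le_pi (by positivity) (by nlinarith)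
  have hcos : cos (π * u / 2) ≤ 1 - (π * u / 2) ^ 2 / 2 + (π * u / 2) ^ 4 * (5 / 96) := by
    have hx : |π * u / 2| ≤ 1 := by rw [abs_of_nonneg (by positivity)]; nlinarith
    have := (abs_le.1 (cos_bound hx)).2
    rw [abs_of_nonneg (by positivity)] at this
    linarith
  have hpoly : 1 - (π * u / 2) ^ 2 / 2 + (π * u / 2) ^ 4 * (5 / 96) ≤ 1 - 9 / 8 * u ^ 2 := by
    have hπ2 : 9.8596 ≤ π ^ 2 ∧ π ^ 2 ≤ 9.9225 := ⟨by nlinarith, by nlinarith⟩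
    have hcoef : 5 * π ^ 4 * u ^ 2 / 1536 ≤ (π ^ 2 - 9) / 8 := by
      have hu2 : u ^ 2 ≤ 1 / 4 := by nlinarith
      nlinarith [mul_le_mul hπ2.2 hπ2.2 (by positivity) (by norm_num)]
    nlinarith [mul_le_mul_of_nonneg_left hcoef (sq_nonneg u)]
  rw [abs_of_nonneg hsin]
  calc sin (π * u) ≤ π * u * cos (π * u / 2) := sin_le_mul_cos_half (by positivity) (by nlinarith)
    _ ≤ π * u * (1 - 9 / 8 * u ^ 2) := by gcongr; linarith

lemma integral_ofReal_mul_exp_mul_I {f : ℝ → ℝ} (hf : Continuous f) (a b lam : ℝ) :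
    ∫ t in a..b, (f t : ℂ) * Complex.exp (lam * t * I)
      = ↑(∫ t in a..b, f t * cos (lam * t)) + I * ↑(∫ t in a..b, f t * sin (lam * t)) := by
  have hsplit : ∀ t : ℝ, (f t : ℂ) * Complex.exp (lam * t * I)
      = ↑(f t * cos (lam * t)) + I * ↑(f t * sin (lam * t)) := fun t => by
    rw [← Complex.ofReal_mul, Complex.exp_mul_I, ← Complex.ofReal_cos, ← Complex.ofReal_sin]
    push_cast; ring
  simp_rw [hsplit]
  rw [intervalIntegral.integral_add (Continuous.intervalIntegrable (by fun_prop) _ _)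
    (Continuous.intervalIntegrable (by fun_prop) _ _), integral_const_mul,
    intervalIntegral.integral_ofReal, intervalIntegral.integral_ofReal]

lemma integral_exp_mul_I {a : ℝ} (ha : a ≠ 0) (T : ℝ) :
    ∫ t in (0:ℝ)..T, Complex.exp (a * t * I) = (Complex.exp (a * T * I) - 1) / (a * I) := by
  simp_rw [mul_right_comm _ _ I]
  rw [integral_exp_mul_complex (by simpa using ha)]
  simp

lemma ofReal_cos_sub_mul_exp (ω lam t : ℝ) :
    ((cos (ω * t) - 1 / 4 : ℝ) : ℂ) * Complex.exp (lam * t * I)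
      = Complex.exp (↑(lam + ω) * t * I) / 2 + Complex.exp (↑(lam - ω) * t * I) / 2
        - Complex.exp (lam * t * I) / 4 := by
  have hp : Complex.exp (↑(lam + ω) * t * I)
      = Complex.exp (↑(ω * t) * I) * Complex.exp (lam * t * I) := by
    rw [← Complex.exp_add]; push_cast; ring_nf
  have hm : Complex.exp (↑(lam - ω) * t * I)
      = Complex.exp (-↑(ω * t) * I) * Complex.exp (lam * t * I) := by
    rw [← Complex.exp_add]; push_cast; ring_nf
  rw [hp, hm, Complex.ofReal_sub, Complex.ofReal_cos, Complex.cos]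
  push_cast; ring

lemma integral_cos_sub_mul_exp (ω lam T : ℝ) :
    ∫ t in (0:ℝ)..T, ((cos (ω * t) - 1 / 4 : ℝ) : ℂ) * Complex.exp (lam * t * I)
      = (∫ t in (0:ℝ)..T, Complex.exp (↑(lam + ω) * t * I)) / 2
        + (∫ t in (0:ℝ)..T, Complex.exp (↑(lam - ω) * t * I)) / 2
        - (∫ t in (0:ℝ)..T, Complex.exp (lam * t * I)) / 4 := by
  simp_rw [ofReal_cos_sub_mul_exp]
  rw [integral_sub (Continuous.intervalIntegrable (by fun_prop) _ _)
      (Continuous.intervalIntegrable (by fun_prop) _ _),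
    integral_add (Continuous.intervalIntegrable (by fun_prop) _ _)
      (Continuous.intervalIntegrable (by fun_prop) _ _),
    integral_div, integral_div, integral_div]

lemma exp_int_mul_mul_I_eq_one {ω T : ℝ} (hωT : ω * T = 2 * π) (k : ℤ) :
    Complex.exp (↑(k * ω) * T * I) = 1 := by
  have h : (ω : ℂ) * T = 2 * π := by exact_mod_cast hωT
  rw [Complex.exp_eq_one_iff]
  exact ⟨k, by push_cast; linear_combination (k * I) * h⟩

lemma integral_exp_mul_I_eq_zero {a T : ℝ} (ha : a ≠ 0) (h : Complex.exp (a * T * I) = 1) :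
    ∫ t in (0:ℝ)..T, Complex.exp (a * t * I) = 0 := by
  rw [integral_exp_mul_I ha, h, sub_self, zero_div]

lemma integral_cos_sub_mul_exp_self {ω T : ℝ} (hω : ω ≠ 0) (hωT : ω * T = 2 * π) :
    ∫ t in (0:ℝ)..T, ((cos (ω * t) - 1 / 4 : ℝ) : ℂ) * Complex.exp (ω * t * I) = T / 2 := by
  have h1 := exp_int_mul_mul_I_eq_one hωT 1
  have h2 := exp_int_mul_mul_I_eq_one hωT 2
  rw [Int.cast_one, one_mul] at h1
  rw [integral_cos_sub_mul_exp, sub_self, show ω + ω = (2 : ℤ) * ω by push_cast; ring,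
    integral_exp_mul_I_eq_zero (by simpa using hω) h2, integral_exp_mul_I_eq_zero hω h1]
  simp

lemma integral_cos_sub_mul_exp_of_ne {ω T lam : ℝ} (hωT : ω * T = 2 * π) (h0 : lam ≠ 0)
    (hm : lam - ω ≠ 0) (hp : lam + ω ≠ 0) :
    ∫ t in (0:ℝ)..T, ((cos (ω * t) - 1 / 4 : ℝ) : ℂ) * Complex.exp (lam * t * I)
      = (Complex.exp (lam * T * I) - 1) / I
        * ↑(1 / (2 * (lam + ω)) + 1 / (2 * (lam - ω)) - 1 / (4 * lam)) := by
  have hshift : ∀ k : ℤ, Complex.exp (↑(lam + k * ω) * T * I) = Complex.exp (lam * T * I) := by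
    intro k
    rw [← mul_one (Complex.exp (lam * T * I)), ← exp_int_mul_mul_I_eq_one hωT k,
      ← Complex.exp_add]
    push_cast; ring_nf
  have hp' : Complex.exp (↑(lam + ω) * T * I) = Complex.exp (lam * T * I) := by
    simpa using hshift 1
  have hm' : Complex.exp (↑(lam - ω) * T * I) = Complex.exp (lam * T * I) := by
    simpa [sub_eq_add_neg] using hshift (-1)
  rw [integral_cos_sub_mul_exp, integral_exp_mul_I hp, integral_exp_mul_I hm,
    integral_exp_mul_I h0, hp', hm']
  push_cast
  have : (lam : ℂ) + ω ≠ 0 := by exact_mod_cast hp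
  have : (lam : ℂ) - ω ≠ 0 := by exact_mod_cast hm
  have : (lam : ℂ) ≠ 0 := by exact_mod_cast h0
  field_simp

lemma norm_filter_integral_eq {ω T u : ℝ} (hω : ω ≠ 0) (hωT : ω * T = 2 * π) (hu0 : u ≠ 0)
    (hu1 : 1 + u ≠ 0) (hu2 : 2 + u ≠ 0) :
    ‖((2 / T : ℝ) : ℂ) * ∫ t in (0:ℝ)..T,
        ((cos (ω * t) - 1 / 4 : ℝ) : ℂ) * Complex.exp (↑(ω * (1 + u)) * t * I)‖
      = |(3 * (1 + u) ^ 2 + 1) * sin (π * u) / (2 * π * u * (1 + u) * (2 + u))| := by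
  have hT : T = 2 * π / ω := by field_simp; linarith
  have hm : ω * (1 + u) - ω = ω * u := by ring
  have hp : ω * (1 + u) + ω = ω * (2 + u) := by ring
  have hK : 1 / (2 * (ω * (1 + u) + ω)) + 1 / (2 * (ω * (1 + u) - ω)) - 1 / (4 * (ω * (1 + u)))
      = (3 * (1 + u) ^ 2 + 1) / (4 * ω * u * (1 + u) * (2 + u)) := by
    rw [hm, hp]; field_simp; ring
  have hsin : ‖Complex.exp (↑(ω * (1 + u)) * T * I) - 1‖ = |2 * sin (π * u)| := by
    rw [mul_comm, ← Complex.ofReal_mul, Complex.norm_exp_I_mul_ofReal_sub_one,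
      show ω * (1 + u) * T / 2 = π * u + π by rw [hT]; field_simp; ring, sin_add_pi,
      Real.norm_eq_abs, mul_neg, abs_neg]
  rw [integral_cos_sub_mul_exp_of_ne hωT (mul_ne_zero hω hu1) (hm ▸ mul_ne_zero hω hu0)
    (hp ▸ mul_ne_zero hω hu2), hK, norm_mul, norm_mul, norm_div, hsin, Complex.norm_I, div_one,
    Complex.norm_real, Complex.norm_real, Real.norm_eq_abs, Real.norm_eq_abs, ← abs_mul,
    ← abs_mul, hT]
  congr 1
  field_simp
  ring

lemma abs_filter_ratio_le {u : ℝ} (hu0 : u ≠ 0) (hu : |u| ≤ 1 / 2) :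
    |(3 * (1 + u) ^ 2 + 1) * sin (π * u) / (2 * π * u * (1 + u) * (2 + u))|
      ≤ 1 - 15 / 32 * u ^ 2 := by
  obtain ⟨hul, hur⟩ := abs_le.1 hu
  have hu2 : u ^ 2 ≤ 1 / 4 := by nlinarith
  have h1u : 0 < 1 + u := by linarith
  have h2u : 0 < 2 + u := by linarith
  have hA : 7 / 4 ≤ 3 * (1 + u) ^ 2 + 1 := by nlinarith
  have hden : |2 * π * u * (1 + u) * (2 + u)| = π * |u| * (2 * (1 + u) * (2 + u)) := by
    rw [abs_mul, abs_mul, abs_mul, abs_mul, abs_of_pos pi_pos, abs_of_pos h1u, abs_of_pos h2u]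
    norm_num; ring
  have hpoly : (3 * (1 + u) ^ 2 + 1) * (1 - 9 / 8 * u ^ 2)
      ≤ (1 - 15 / 32 * u ^ 2) * (2 * (1 + u) * (2 + u)) := by
    have hcoef : 0 ≤ 21 / 32 * (3 * (1 + u) ^ 2 + 1) - 1 := by linarith
    nlinarith [mul_nonneg (sq_nonneg u) hcoef]
  rw [abs_div, abs_mul, abs_of_pos (by positivity : (0:ℝ) < 3 * (1 + u) ^ 2 + 1), hden,
    div_le_iff₀ (mul_pos (mul_pos pi_pos (abs_pos.2 hu0)) (by positivity))]
  calc (3 * (1 + u) ^ 2 + 1) * |sin (π * u)|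
      ≤ (3 * (1 + u) ^ 2 + 1) * (π * |u| * (1 - 9 / 8 * u ^ 2)) := by
        gcongr; exact abs_sin_pi_mul_le hu
    _ = π * |u| * ((3 * (1 + u) ^ 2 + 1) * (1 - 9 / 8 * u ^ 2)) := by ring
    _ ≤ π * |u| * ((1 - 15 / 32 * u ^ 2) * (2 * (1 + u) * (2 + u))) := by gcongr
    _ = (1 - 15 / 32 * u ^ 2) * (π * |u| * (2 * (1 + u) * (2 + u))) := by ring

theorem filter_bound_near_general (ω : ℝ) (hω : 0 < ω) (T : ℝ) (hT : T = 2 * π / ω)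
    (β γ : ℝ → ℝ)
    (hβ : ∀ lam, β lam = (2 / T) * ∫ t in (0:ℝ)..T,
        (Real.cos (ω * t) - 1 / 4) * Real.cos (lam * t))
    (hγ : ∀ lam, γ lam = (2 / T) * ∫ t in (0:ℝ)..T,
        (Real.cos (ω * t) - 1 / 4) * Real.sin (lam * t))
    (μ : ℝ → ℂ) (hμ : ∀ lam, μ lam = (β lam : ℂ) + Complex.I * (γ lam : ℂ))
    (lam : ℝ) (hnear : |lam - ω| / ω ≤ 1 / 2) :
    ‖μ lam‖ ≤ 1 - (15 / 32) * ((lam - ω) / ω) ^ 2 := by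
  have hωT : ω * T = 2 * π := by rw [hT]; field_simp
  have hμ_eq : μ lam = ((2 / T : ℝ) : ℂ) * ∫ t in (0:ℝ)..T,
      ((cos (ω * t) - 1 / 4 : ℝ) : ℂ) * Complex.exp (lam * t * I) := by
    rw [hμ, hβ, hγ, integral_ofReal_mul_exp_mul_I (by fun_prop)]
    push_cast; ring
  rcases eq_or_ne lam ω with rfl | hne
  · have hT0 : T ≠ 0 := by rw [hT]; positivity
    rw [hμ_eq, integral_cos_sub_mul_exp_self hω.ne' hωT]
    norm_num [hT0]
  · set u := (lam - ω) / ω with hu_def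
    have hu0 : u ≠ 0 := div_ne_zero (sub_ne_zero.2 hne) hω.ne'
    have hu : |u| ≤ 1 / 2 := by rwa [abs_div, abs_of_pos hω]
    have hlam : lam = ω * (1 + u) := by rw [hu_def]; field_simp; ring
    obtain ⟨hul, hur⟩ := abs_le.1 hu
    rw [hμ_eq, hlam, norm_filter_integral_eq hω.ne' hωT hu0 (by linarith) (by linarith)]
    exact abs_filter_ratio_le hu0 hu

/-- if |λ − ω|/ω ≤ 1/2 then |μ(λ)| ≤ 1 − (15/32)((λ − ω)/ω)². -/
theorem filter_bound_near (ω : ℝ) (hω : 0 < ω) (T : ℝ) (hT : T = 2 * π / ω)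
    (β γ : ℝ → ℝ)
    (hβ : ∀ lam, β lam = (2 / T) * ∫ t in (0:ℝ)..T,
        (Real.cos (ω * t) - 1 / 4) * Real.cos (lam * t))
    (hγ : ∀ lam, γ lam = (2 / T) * ∫ t in (0:ℝ)..T,
        (Real.cos (ω * t) - 1 / 4) * Real.sin (lam * t))
    (μ : ℝ → ℂ) (hμ : ∀ lam, μ lam = (β lam : ℂ) + Complex.I * (γ lam : ℂ))
    (lam : ℝ) (hlam : 0 ≤ lam) (hnear : |lam - ω| / ω ≤ 1 / 2) :
    ‖μ lam‖ ≤ 1 - (15 / 32) * ((lam - ω) / ω) ^ 2 :=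
  filter_bound_near_general ω hω T hT β γ hβ hγ μ hμ lam hnear
end

section
/- For the filter function μ(λ) = β(λ) + iγ(λ) with ω > 0, T = 2π/ω, if |λ − ω|/ω ≥ 1/2 then |μ(λ)| ≤ 7/(3π). -/
/-!
Because `ω T = 2π`, both integrands have elementary antiderivatives, and with `x = λ / ω` one gets
`μ(λ) = c (sin 2πx + i (1 - cos 2πx))` with `c = (3x² + 1) / (4πx (x² - 1))`, hence
`|μ(λ)| = (3x² + 1) |sin πx| / (2πx |x² - 1|)`. The hypothesis says `x ≤ 1/2` or `x ≥ 3/2`, and there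
`3 (3x² + 1) |sin πx| ≤ 14 x |x² - 1|`: for `x ≥ 3/10` already with `|sin πx| ≤ 1` (with equality at
`x = 1/2`), and for `x ≤ 3/10` from `|sin πx| ≤ πx`. At `λ = 0` one has `μ(0) = -1/2`.
-/

open Real intervalIntegral

lemma integral_cos_sub_quarter {ω T : ℝ} (hω : ω ≠ 0) (hT : ω * T = 2 * π) :
    ∫ t in (0 : ℝ)..T, (cos (ω * t) - 1 / 4) = -T / 4 := by
  rw [integral_sub (Continuous.intervalIntegrable (by fun_prop) _ _) intervalIntegrable_const,
    integral_comp_mul_left (fun t => cos t) hω]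
  simp [hT]
  ring

lemma integral_cos_sub_quarter_mul_cos {ω lam T : ℝ} (hlam : lam ≠ 0) (hne : lam ^ 2 ≠ ω ^ 2)
    (hT : ω * T = 2 * π) :
    ∫ t in (0 : ℝ)..T, (cos (ω * t) - 1 / 4) * cos (lam * t)
      = (3 * lam ^ 2 + ω ^ 2) / (4 * lam * (lam ^ 2 - ω ^ 2)) * sin (lam * T) := by
  have hne' : lam ^ 2 - ω ^ 2 ≠ 0 := sub_ne_zero.2 hne
  have hderiv : ∀ t, HasDerivAt
      (fun t => (lam * cos (ω * t) * sin (lam * t) - ω * sin (ω * t) * cos (lam * t))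
        / (lam ^ 2 - ω ^ 2) - sin (lam * t) / (4 * lam))
      ((cos (ω * t) - 1 / 4) * cos (lam * t)) t := by
    intro t
    have hω := (hasDerivAt_id' t).const_mul ω
    have hl := (hasDerivAt_id' t).const_mul lam
    have h := ((hω.cos.const_mul lam).fun_mul hl.sin).fun_sub ((hω.sin.const_mul ω).fun_mul hl.cos)
    refine ((h.div_const (lam ^ 2 - ω ^ 2)).fun_sub (hl.sin.div_const (4 * lam))).congr_deriv ?_
    field_simp
    ring
  rw [integral_eq_sub_of_hasDerivAt (fun t _ => hderiv t)
    (Continuous.intervalIntegrable (by fun_prop) _ _)]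
  simp [hT]
  field_simp
  ring

lemma integral_cos_sub_quarter_mul_sin {ω lam T : ℝ} (hlam : lam ≠ 0) (hne : lam ^ 2 ≠ ω ^ 2)
    (hT : ω * T = 2 * π) :
    ∫ t in (0 : ℝ)..T, (cos (ω * t) - 1 / 4) * sin (lam * t)
      = (3 * lam ^ 2 + ω ^ 2) / (4 * lam * (lam ^ 2 - ω ^ 2)) * (1 - cos (lam * T)) := by
  have hne' : lam ^ 2 - ω ^ 2 ≠ 0 := sub_ne_zero.2 hne
  have hderiv : ∀ t, HasDerivAt
      (fun t => cos (lam * t) / (4 * lam)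
        - (lam * cos (ω * t) * cos (lam * t) + ω * sin (ω * t) * sin (lam * t)) / (lam ^ 2 - ω ^ 2))
      ((cos (ω * t) - 1 / 4) * sin (lam * t)) t := by
    intro t
    have hω := (hasDerivAt_id' t).const_mul ω
    have hl := (hasDerivAt_id' t).const_mul lam
    have h := ((hω.cos.const_mul lam).fun_mul hl.cos).fun_add ((hω.sin.const_mul ω).fun_mul hl.sin)
    refine ((hl.cos.div_const (4 * lam)).fun_sub (h.div_const (lam ^ 2 - ω ^ 2))).congr_deriv ?_
    field_simp
    ring
  rw [integral_eq_sub_of_hasDerivAt (fun t _ => hderiv t)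
    (Continuous.intervalIntegrable (by fun_prop) _ _)]
  simp [hT]
  field_simp
  ring

lemma norm_ofReal_mul_sin_add_I_mul_one_sub_cos (a θ : ℝ) :
    ‖((a * sin θ : ℝ) : ℂ) + Complex.I * ((a * (1 - cos θ) : ℝ) : ℂ)‖
      = 2 * |a| * |sin (θ / 2)| := by
  have hhalf : sin θ ^ 2 + (1 - cos θ) ^ 2 = 4 * sin (θ / 2) ^ 2 := by
    rw [sin_sq_eq_half_sub (θ / 2), mul_div_cancel₀ θ two_ne_zero]
    linear_combination sin_sq_add_cos_sq θ
  have hsq : (a * sin θ) ^ 2 + (a * (1 - cos θ)) ^ 2 = (2 * |a| * |sin (θ / 2)|) ^ 2 := by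
    rw [mul_pow, mul_pow, mul_pow, mul_pow, sq_abs, sq_abs]
    linear_combination a ^ 2 * hhalf
  rw [mul_comm Complex.I, Complex.norm_add_mul_I, hsq, sqrt_sq (by positivity)]

lemma three_mul_abs_sin_pi_mul_le {x : ℝ} (hx : 0 < x) (h : x ≤ 1 / 2 ∨ 3 / 2 ≤ x) :
    3 * (3 * x ^ 2 + 1) * |sin (π * x)| ≤ 14 * x * |x ^ 2 - 1| := by
  rcases le_or_gt x (3 / 10) with hsmall | hlarge
  · have hsin : |sin (π * x)| ≤ π * x :=
      abs_sin_le_abs.trans_eq (abs_of_pos (by positivity))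
    rw [abs_of_neg (show x ^ 2 - 1 < 0 by nlinarith)]
    calc 3 * (3 * x ^ 2 + 1) * |sin (π * x)| ≤ 3 * (3 * x ^ 2 + 1) * (π * x) := by gcongr
      _ ≤ 14 * x * -(x ^ 2 - 1) := by
        nlinarith [pi_lt_d2, mul_le_mul_of_nonneg_left hsmall hx.le, mul_pos pi_pos hx]
  · have hpoly : 3 * (3 * x ^ 2 + 1) ≤ 14 * x * |x ^ 2 - 1| := by
      rcases h with h | h
      · rw [abs_of_neg (show x ^ 2 - 1 < 0 by nlinarith)]
        nlinarith [mul_nonneg (sub_nonneg.2 h) (sub_nonneg.2 hlarge.le)]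
      · rw [abs_of_pos (show 0 < x ^ 2 - 1 by nlinarith)]
        nlinarith [mul_nonneg (sub_nonneg.2 h) (sub_nonneg.2 h)]
    calc 3 * (3 * x ^ 2 + 1) * |sin (π * x)| ≤ 3 * (3 * x ^ 2 + 1) * 1 := by
          gcongr; exact abs_sin_le_one _
      _ ≤ 14 * x * |x ^ 2 - 1| := by linarith

lemma two_mul_abs_div_mul_abs_sin_pi_mul_le {x : ℝ} (hx : 0 < x) (h : x ≤ 1 / 2 ∨ 3 / 2 ≤ x) :
    2 * |(3 * x ^ 2 + 1) / (4 * π * x * (x ^ 2 - 1))| * |sin (π * x)| ≤ 7 / (3 * π) := by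
  have hx1 : 0 < |x ^ 2 - 1| := abs_pos.2 (by rcases h with h | h <;> nlinarith)
  rw [abs_div, abs_mul, abs_of_pos (by positivity : 0 < 3 * x ^ 2 + 1),
    abs_of_pos (by positivity : 0 < 4 * π * x)]
  calc 2 * ((3 * x ^ 2 + 1) / (4 * π * x * |x ^ 2 - 1|)) * |sin (π * x)|
      = 3 * (3 * x ^ 2 + 1) * |sin (π * x)| / (6 * π * x * |x ^ 2 - 1|) := by
        field_simp; ring
    _ ≤ 14 * x * |x ^ 2 - 1| / (6 * π * x * |x ^ 2 - 1|) :=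
        div_le_div_of_nonneg_right (three_mul_abs_sin_pi_mul_le hx h) (by positivity)
    _ = 7 / (3 * π) := by field_simp; ring

/-- if |λ − ω|/ω ≥ 1/2 then |μ(λ)| ≤ 7/(3π). -/
theorem filter_bound_far (ω : ℝ) (hω : 0 < ω) (T : ℝ) (hT : T = 2 * π / ω)
    (β γ : ℝ → ℝ)
    (hβ : ∀ lam, β lam = (2 / T) * ∫ t in (0:ℝ)..T,
        (Real.cos (ω * t) - 1 / 4) * Real.cos (lam * t))
    (hγ : ∀ lam, γ lam = (2 / T) * ∫ t in (0:ℝ)..T,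
        (Real.cos (ω * t) - 1 / 4) * Real.sin (lam * t))
    (μ : ℝ → ℂ) (hμ : ∀ lam, μ lam = (β lam : ℂ) + Complex.I * (γ lam : ℂ))
    (lam : ℝ) (hlam : 0 ≤ lam) (hfar : 1 / 2 ≤ |lam - ω| / ω) :
    ‖μ lam‖ ≤ 7 / (3 * π) := by
  have hωT : ω * T = 2 * π := by rw [hT]; field_simp
  rcases hlam.eq_or_lt with rfl | hpos
  · have hβ0 : β 0 = -1 / 2 := by
      have hT0 : T ≠ 0 := by rw [hT]; positivity
      rw [hβ]
      simp only [zero_mul, cos_zero, mul_one, integral_cos_sub_quarter hω.ne' hωT]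
      field_simp
      norm_num
    have hγ0 : γ 0 = 0 := by simp [hγ]
    rw [hμ, hβ0, hγ0, le_div_iff₀ (by positivity)]
    norm_num
    linarith [pi_lt_d2]
  obtain ⟨x, rfl⟩ : ∃ x, lam = x * ω := ⟨lam / ω, by field_simp⟩
  have hx : 0 < x := pos_of_mul_pos_left hpos hω.le
  have hfar' : x ≤ 1 / 2 ∨ 3 / 2 ≤ x := by
    rw [← sub_one_mul, abs_mul, abs_of_pos hω, mul_div_cancel_right₀ _ hω.ne'] at hfar
    exact (le_abs'.1 hfar).imp (fun h => by linarith) (fun h => by linarith)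
  have hne : (x * ω) ^ 2 ≠ ω ^ 2 := by
    rw [mul_pow, Ne, mul_eq_right₀ (pow_ne_zero 2 hω.ne')]
    rcases hfar' with h | h <;> nlinarith
  rw [hμ, hβ, hγ, integral_cos_sub_quarter_mul_cos (by positivity) hne hωT,
    integral_cos_sub_quarter_mul_sin (by positivity) hne hωT, ← mul_assoc (2 / T),
    ← mul_assoc (2 / T), norm_ofReal_mul_sin_add_I_mul_one_sub_cos]
  have hK : 2 / T * ((3 * (x * ω) ^ 2 + ω ^ 2) / (4 * (x * ω) * ((x * ω) ^ 2 - ω ^ 2)))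
      = (3 * x ^ 2 + 1) / (4 * π * x * (x ^ 2 - 1)) := by
    rw [hT]; field_simp
  have harg : x * ω * T / 2 = π * x := by rw [hT]; field_simp
  rw [hK, harg]
  exact two_mul_abs_div_mul_abs_sin_pi_mul_le hx hfar'
end

section
/- For the filter function μ(λ) = β(λ) + iγ(λ) with ω > 0, T = 2π/ω, if λ > ω then |μ(λ)| ≤ (3/(2π)) · ω/(λ − ω). -/
/-!
Product-to-sum turns the integrands into sines and cosines of `(λ ± ω) t` and `λ t`. Since
`ω T = 2π`, all boundary terms at `T` reduce to `sin λT` and `1 - cos λT`, so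
`μ(λ) = (2 / T) k (sin λT + i (1 - cos λT))` with `k = λ / (λ² - ω²) - 1 / (4λ)`.
The last factor equals `i (1 - e^{iλT})`, of norm at most `2`, and
`k = (3λ² + ω²) / (4λ (λ² - ω²)) ≤ 3 / (4 (λ - ω))` because `ω² ≤ 3λω`.
-/

open Real intervalIntegral

namespace FilterBound

theorem integral_cos_mul {c : ℝ} (hc : c ≠ 0) (T : ℝ) :
    ∫ t in (0:ℝ)..T, cos (c * t) = sin (c * T) / c := by
  simp [integral_comp_mul_left cos hc, div_eq_inv_mul]

theorem integral_sin_mul {c : ℝ} (hc : c ≠ 0) (T : ℝ) :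
    ∫ t in (0:ℝ)..T, sin (c * t) = (1 - cos (c * T)) / c := by
  simp [integral_comp_mul_left sin hc, div_eq_inv_mul]

noncomputable def filterGain (a ω lam : ℝ) : ℝ := lam / (lam ^ 2 - ω ^ 2) - a / lam

variable {ω T lam : ℝ}

theorem integral_cos_sub_mul_cos (a : ℝ) (hωT : ω * T = 2 * π) (hlam : lam ≠ 0)
    (hsub : lam - ω ≠ 0) (hadd : lam + ω ≠ 0) :
    ∫ t in (0:ℝ)..T, (cos (ω * t) - a) * cos (lam * t)
      = filterGain a ω lam * sin (lam * T) := by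
  have hprod : ∀ t, (cos (ω * t) - a) * cos (lam * t)
      = (cos ((lam - ω) * t) + cos ((lam + ω) * t)) / 2 - a * cos (lam * t) := by
    intro t
    rw [show (lam - ω) * t = lam * t - ω * t by ring,
      show (lam + ω) * t = lam * t + ω * t by ring,
      cos_sub, cos_add]
    ring
  have hsub' : sin ((lam - ω) * T) = sin (lam * T) := by
    rw [sub_mul, hωT, sin_sub_two_pi]
  have hadd' : sin ((lam + ω) * T) = sin (lam * T) := by
    rw [add_mul, hωT, sin_add_two_pi]
  simp_rw [hprod]
  rw [integral_sub, integral_div, integral_add, integral_const_mul, integral_cos_mul hlam,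
    integral_cos_mul hsub, integral_cos_mul hadd, hsub', hadd']
  · have hsq : lam ^ 2 - ω ^ 2 ≠ 0 := by rw [sq_sub_sq]; exact mul_ne_zero hadd hsub
    rw [filterGain]
    field_simp
    ring
  all_goals exact Continuous.intervalIntegrable (by fun_prop) _ _

theorem integral_cos_sub_mul_sin (a : ℝ) (hωT : ω * T = 2 * π) (hlam : lam ≠ 0)
    (hsub : lam - ω ≠ 0) (hadd : lam + ω ≠ 0) :
    ∫ t in (0:ℝ)..T, (cos (ω * t) - a) * sin (lam * t)
      = filterGain a ω lam * (1 - cos (lam * T)) := by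
  have hprod : ∀ t, (cos (ω * t) - a) * sin (lam * t)
      = (sin ((lam - ω) * t) + sin ((lam + ω) * t)) / 2 - a * sin (lam * t) := by
    intro t
    rw [show (lam - ω) * t = lam * t - ω * t by ring,
      show (lam + ω) * t = lam * t + ω * t by ring,
      sin_sub, sin_add]
    ring
  have hsub' : cos ((lam - ω) * T) = cos (lam * T) := by
    rw [sub_mul, hωT, cos_sub_two_pi]
  have hadd' : cos ((lam + ω) * T) = cos (lam * T) := by
    rw [add_mul, hωT, cos_add_two_pi]
  simp_rw [hprod]
  rw [integral_sub, integral_div, integral_add, integral_const_mul, integral_sin_mul hlam,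
    integral_sin_mul hsub, integral_sin_mul hadd, hsub', hadd']
  · have hsq : lam ^ 2 - ω ^ 2 ≠ 0 := by rw [sq_sub_sq]; exact mul_ne_zero hadd hsub
    rw [filterGain]
    field_simp
    ring
  all_goals exact Continuous.intervalIntegrable (by fun_prop) _ _

theorem norm_sin_add_I_mul_one_sub_cos_le (x : ℝ) :
    ‖(sin x : ℂ) + Complex.I * ((1 - cos x : ℝ) : ℂ)‖ ≤ 2 := by
  have h : (sin x : ℂ) + Complex.I * ((1 - cos x : ℝ) : ℂ)
      = Complex.I * (1 - Complex.exp (x * Complex.I)) := by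
    rw [Complex.exp_mul_I]
    push_cast
    ring_nf
    rw [Complex.I_sq]
    ring
  calc _ = ‖1 - Complex.exp (x * Complex.I)‖ := by rw [h, norm_mul, Complex.norm_I, one_mul]
    _ ≤ ‖(1 : ℂ)‖ + ‖Complex.exp (x * Complex.I)‖ := norm_sub_le _ _
    _ = 2 := by rw [norm_one, Complex.norm_exp_ofReal_mul_I]; norm_num

theorem filterGain_nonneg {a : ℝ} (ha : a ≤ 1) (hω : 0 < ω) (hlam : ω < lam) :
    0 ≤ filterGain a ω lam := by
  have h0 : 0 < lam := hω.trans hlam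
  have h1 : 0 < lam ^ 2 - ω ^ 2 := by nlinarith
  rw [filterGain, sub_nonneg, div_le_div_iff₀ h0 h1]
  nlinarith

theorem filterGain_quarter_le (hω : 0 < ω) (hlam : ω < lam) :
    filterGain (1 / 4) ω lam ≤ 3 / (4 * (lam - ω)) := by
  have h0 : 0 < lam := hω.trans hlam
  have h1 : 0 < lam - ω := by linarith
  rw [filterGain, show lam ^ 2 - ω ^ 2 = (lam - ω) * (lam + ω) by ring,
    div_sub_div _ _ (by positivity) h0.ne', div_le_div_iff₀ (by positivity) (by positivity)]
  nlinarith [mul_pos h0 hω, mul_pos (mul_pos h0 hω) h1]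

end FilterBound

open FilterBound

/-- if λ > ω then |μ(λ)| ≤ (3/(2π)) · ω/(λ − ω). -/
theorem filter_bound_decay (ω : ℝ) (hω : 0 < ω) (T : ℝ) (hT : T = 2 * π / ω)
    (β γ : ℝ → ℝ)
    (hβ : ∀ lam, β lam = (2 / T) * ∫ t in (0:ℝ)..T,
        (Real.cos (ω * t) - 1 / 4) * Real.cos (lam * t))
    (hγ : ∀ lam, γ lam = (2 / T) * ∫ t in (0:ℝ)..T,
        (Real.cos (ω * t) - 1 / 4) * Real.sin (lam * t))
    (μ : ℝ → ℂ) (hμ : ∀ lam, μ lam = (β lam : ℂ) + Complex.I * (γ lam : ℂ))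
    (lam : ℝ) (hlam : ω < lam) :
    ‖μ lam‖ ≤ (3 / (2 * π)) * ω / (lam - ω) := by
  have hωT : ω * T = 2 * π := by rw [hT]; field_simp
  have hlam0 : lam ≠ 0 := (hω.trans hlam).ne'
  have hsub : lam - ω ≠ 0 := sub_ne_zero.2 hlam.ne'
  have hadd : lam + ω ≠ 0 := by linarith
  set k := filterGain (1 / 4) ω lam
  have hk : 0 ≤ k := filterGain_nonneg (by norm_num) hω hlam
  have hμk : μ lam = ((2 / T * k : ℝ) : ℂ)
      * ((sin (lam * T) : ℂ) + Complex.I * ((1 - cos (lam * T) : ℝ) : ℂ)) := by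
    rw [hμ, hβ, hγ, integral_cos_sub_mul_cos _ hωT hlam0 hsub hadd,
      integral_cos_sub_mul_sin _ hωT hlam0 hsub hadd]
    push_cast
    ring
  have hT0 : 0 < T := by rw [hT]; positivity
  calc ‖μ lam‖
      = 2 / T * k
          * ‖(sin (lam * T) : ℂ) + Complex.I * ((1 - cos (lam * T) : ℝ) : ℂ)‖ := by
        rw [hμk, norm_mul, Complex.norm_real, Real.norm_of_nonneg (by positivity)]
    _ ≤ 2 / T * (3 / (4 * (lam - ω))) * 2 := by
        gcongr
        exacts [filterGain_quarter_le hω hlam, norm_sin_add_I_mul_one_sub_cos_le _]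
    _ = (3 / (2 * π)) * ω / (lam - ω) := by
        rw [hT]
        field_simp
        ring
end

section
/- With B = !![β, γ/λ; −λγ, β] for λ > 0 and β² + γ² < 1, the powers Bⁿ converge to the zero matrix, and moreover each entry of Bⁿ is bounded: |(Bⁿ)₁₁|, |(Bⁿ)₂₂| ≤ rⁿ, |(Bⁿ)₁₂| ≤ rⁿ/λ, |(Bⁿ)₂₁| ≤ λrⁿ, where r = √(β² + γ²). -/
open Matrix Filter

/-!
For `λ ≠ 0` the matrices `!![a, b/λ; -λb, a]` form a copy of `ℂ` inside `Matrix (Fin 2) (Fin 2) ℝ`,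
with `a + b i` corresponding to that matrix; `B` corresponds to `z = β + γ i`, so `Bⁿ` corresponds
to `zⁿ`. Its entries are then bounded by `‖zⁿ‖ = rⁿ` (up to the factors `λ`, `1/λ`), and
`zⁿ → 0` because `‖z‖ = r < 1`.
-/

noncomputable def scaledRot (lam : ℝ) (z : ℂ) : Matrix (Fin 2) (Fin 2) ℝ :=
  !![z.re, z.im / lam; -(lam * z.im), z.re]

section

variable {lam : ℝ}

theorem scaledRot_one : scaledRot lam 1 = 1 := by
  ext i j
  fin_cases i <;> fin_cases j <;> simp [scaledRot]

theorem scaledRot_zero : scaledRot lam 0 = 0 := by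
  ext i j
  fin_cases i <;> fin_cases j <;> simp [scaledRot]

theorem scaledRot_mul (hlam : lam ≠ 0) (z w : ℂ) :
    scaledRot lam z * scaledRot lam w = scaledRot lam (z * w) := by
  ext i j
  fin_cases i <;> fin_cases j <;> simp [scaledRot, Matrix.mul_apply, Fin.sum_univ_two] <;>
    field_simp <;> ring

theorem scaledRot_pow (hlam : lam ≠ 0) (z : ℂ) (n : ℕ) :
    scaledRot lam z ^ n = scaledRot lam (z ^ n) := by
  induction n with
  | zero => simp [scaledRot_one]
  | succ n ih => rw [pow_succ, ih, scaledRot_mul hlam, pow_succ]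

theorem continuous_scaledRot (lam : ℝ) : Continuous (scaledRot lam) := by
  unfold scaledRot
  fun_prop

theorem abs_scaledRot_apply_le (hlam : 0 < lam) (z : ℂ) :
    |scaledRot lam z 0 0| ≤ ‖z‖ ∧ |scaledRot lam z 1 1| ≤ ‖z‖ ∧
      |scaledRot lam z 0 1| ≤ ‖z‖ / lam ∧ |scaledRot lam z 1 0| ≤ lam * ‖z‖ := by
  simp only [scaledRot, of_apply, cons_val', cons_val_zero, cons_val_one, empty_val',
    cons_val_fin_one, abs_div, abs_neg, abs_mul, abs_of_pos hlam]
  exact ⟨z.abs_re_le_norm, z.abs_re_le_norm, by gcongr; exact z.abs_im_le_norm,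
    by gcongr; exact z.abs_im_le_norm⟩

end

/-- with B = !![β, γ/λ; −λγ, β], λ > 0 and r = √(β² + γ²) < 1,
Bⁿ → 0 and the entries of Bⁿ satisfy the stated bounds. -/
theorem B_pow_tendsto_zero (β γ lam r : ℝ) (hlam : 0 < lam)
    (hr : r = Real.sqrt (β ^ 2 + γ ^ 2)) (hr1 : r < 1)
    (B : Matrix (Fin 2) (Fin 2) ℝ) (hB : B = !![β, γ / lam; -(lam * γ), β]) :
    Filter.Tendsto (fun n : ℕ => B ^ n) Filter.atTop (nhds 0) ∧
    (∀ n : ℕ,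
      |(B ^ n) 0 0| ≤ r ^ n ∧ |(B ^ n) 1 1| ≤ r ^ n ∧
      |(B ^ n) 0 1| ≤ r ^ n / lam ∧ |(B ^ n) 1 0| ≤ lam * r ^ n) := by
  set z : ℂ := ⟨β, γ⟩
  have hz : ‖z‖ = r := by rw [hr, Complex.norm_eq_sqrt_sq_add_sq]
  have hBn (n : ℕ) : B ^ n = scaledRot lam (z ^ n) := by
    rw [hB, ← scaledRot_pow hlam.ne']
    rfl
  simp only [hBn]
  refine ⟨?_, fun n => by simpa only [norm_pow, hz] using abs_scaledRot_apply_le hlam (z ^ n)⟩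
  have hzn : Tendsto (fun n : ℕ => z ^ n) atTop (nhds 0) :=
    tendsto_pow_atTop_nhds_zero_of_norm_lt_one (hz ▸ hr1)
  simpa only [scaledRot_zero, Function.comp_def] using
    ((continuous_scaledRot lam).tendsto 0).comp hzn
end

section
/- Let ρ ∈ [0,1) and suppose a sequence of reals (r_j) satisfies 0 ≤ r_j ≤ ρ for all j, and let (λ_j), (φ_j) be as in the modal error recursion eⁿ_j = B_jⁿ e⁰_j with B_j = !![β_j, γ_j/λ_j; −λ_jγ_j, β_j], r_j = √(β_j² + γ_j²), λ_j > 0, and sup_j λ_j r_j ≤ D. Then Σ_j λ_j² |(B_jⁿ e⁰_j)₁|² + λ_j²|(B_jⁿ e⁰_j)₂|² ≤ 2ρ^{2n−2}(1 + D²) Σ_j (λ_j² |e⁰_{j,1}|² + |e⁰_{j,2}|²) for n ≥ 1. -/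
open Matrix

set_option maxHeartbeats 1000000 in
/-- gradient-error decay estimate for the modal recursion
eⁿ_j = B_jⁿ e⁰_j with B_j = !![β_j, γ_j/λ_j; −λ_jγ_j, β_j]. -/
theorem gradient_error_decay
    (β γ lam : ℕ → ℝ) (hlam : ∀ j, 0 < lam j)
    (r : ℕ → ℝ) (hr : ∀ j, r j = Real.sqrt ((β j) ^ 2 + (γ j) ^ 2))
    (ρ : ℝ) (hρ0 : 0 ≤ ρ) (hρ1 : ρ < 1) (hrρ : ∀ j, r j ≤ ρ)
    (D : ℝ) (hD : ∀ j, lam j * r j ≤ D)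
    (B : ℕ → Matrix (Fin 2) (Fin 2) ℝ)
    (hB : ∀ j, B j = !![β j, γ j / lam j; -(lam j * γ j), β j])
    (e0 : ℕ → Fin 2 → ℝ)
    (hsum : Summable (fun j => (lam j) ^ 2 * (e0 j 0) ^ 2 + (e0 j 1) ^ 2)) :
    ∀ n : ℕ, 1 ≤ n →
      (∑' j, ((lam j) ^ 2 * (((B j) ^ n).mulVec (e0 j) 0) ^ 2
            + (lam j) ^ 2 * (((B j) ^ n).mulVec (e0 j) 1) ^ 2))
      ≤ 2 * ρ ^ (2 * n - 2) * (1 + D ^ 2)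
          * ∑' j, ((lam j) ^ 2 * (e0 j 0) ^ 2 + (e0 j 1) ^ 2) := by
  intro n hn
  have hr0 : ∀ j, 0 ≤ r j := fun j => (hr j) ▸ Real.sqrt_nonneg _
  have hrsq : ∀ j, (β j) ^ 2 + (γ j) ^ 2 = (r j) ^ 2 := by
    intro j
    rw [hr j, Real.sq_sqrt (by positivity)]
  have hD0 : 0 ≤ D := le_trans (mul_nonneg (hlam 0).le (hr0 0)) (hD 0)
  -- components of one application of B j
  have hstep : ∀ j (w : Fin 2 → ℝ),
      (B j).mulVec w 0 = β j * w 0 + γ j / lam j * w 1 ∧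
      (B j).mulVec w 1 = -(lam j * γ j) * w 0 + β j * w 1 := by
    intro j w
    rw [hB]
    constructor <;>
      simp [Matrix.mulVec, dotProduct, Fin.sum_univ_two]
  -- key exact identity for the conjugated norm
  have key : ∀ j m, (lam j) ^ 2 * (((B j) ^ m).mulVec (e0 j) 0) ^ 2
      + (((B j) ^ m).mulVec (e0 j) 1) ^ 2
      = ((β j) ^ 2 + (γ j) ^ 2) ^ m
        * ((lam j) ^ 2 * (e0 j 0) ^ 2 + (e0 j 1) ^ 2) := by
    intro j m
    induction m with
    | zero => simp [Matrix.one_mulVec]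
    | succ m ih =>
        have hpow : (B j) ^ (m + 1) = (B j) * (B j) ^ m := pow_succ' _ _
        rw [hpow, ← Matrix.mulVec_mulVec]
        set w := ((B j) ^ m).mulVec (e0 j) with hw
        obtain ⟨h0, h1⟩ := hstep j w
        rw [h0, h1]
        have hlne : lam j ≠ 0 := (hlam j).ne'
        have expand : (lam j) ^ 2 * (β j * w 0 + γ j / lam j * w 1) ^ 2
            + (-(lam j * γ j) * w 0 + β j * w 1) ^ 2
            = ((β j) ^ 2 + (γ j) ^ 2) * ((lam j) ^ 2 * w 0 ^ 2 + w 1 ^ 2) := by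
          field_simp
          ring
        rw [expand, ih]
        ring
  -- termwise bound
  set C : ℝ := 2 * ρ ^ (2 * n - 2) * (1 + D ^ 2) with hC
  obtain ⟨m, rfl⟩ : ∃ m, n = m + 1 := ⟨n - 1, by omega⟩
  have hsub : 2 * (m + 1) - 2 = 2 * m := by omega
  have hterm : ∀ j,
      (lam j) ^ 2 * (((B j) ^ (m + 1)).mulVec (e0 j) 0) ^ 2
        + (lam j) ^ 2 * (((B j) ^ (m + 1)).mulVec (e0 j) 1) ^ 2
      ≤ C * ((lam j) ^ 2 * (e0 j 0) ^ 2 + (e0 j 1) ^ 2) := by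
    intro j
    set M := (lam j) ^ 2 * (e0 j 0) ^ 2 + (e0 j 1) ^ 2 with hM
    have hM0 : 0 ≤ M := by positivity
    have hpow : (B j) ^ (m + 1) = (B j) * (B j) ^ m := pow_succ' _ _
    have hmv : ((B j) ^ (m + 1)).mulVec (e0 j)
        = (B j).mulVec (((B j) ^ m).mulVec (e0 j)) := by
      rw [hpow, ← Matrix.mulVec_mulVec]
    set a := ((B j) ^ m).mulVec (e0 j) with ha
    obtain ⟨h0, h1⟩ := hstep j a
    have keym := key j m
    have keym1 := key j (m + 1)
    rw [hrsq j] at keym keym1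
    -- bounds on powers of r
    have hrρ2 : (r j) ^ 2 ≤ ρ ^ 2 := by
      have := hrρ j; nlinarith [hr0 j]
    have hpowle : ((r j) ^ 2) ^ m ≤ (ρ ^ 2) ^ m :=
      pow_le_pow_left₀ (by positivity) hrρ2 m
    have hρ2le1 : ρ ^ 2 ≤ 1 := by nlinarith
    have hpow1 : ((r j) ^ 2) ^ (m + 1) ≤ (ρ ^ 2) ^ m := by
      calc ((r j) ^ 2) ^ (m + 1) = ((r j) ^ 2) ^ m * (r j) ^ 2 := pow_succ _ _
        _ ≤ (ρ ^ 2) ^ m * 1 := by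
            apply mul_le_mul hpowle (by nlinarith [hr0 j, hrρ j]) (by positivity)
              (by positivity)
        _ = (ρ ^ 2) ^ m := by ring
    -- first component bound
    have hb0 : (lam j) ^ 2 * ((B j ^ (m + 1)).mulVec (e0 j) 0) ^ 2
        ≤ (ρ ^ 2) ^ m * M := by
      calc (lam j) ^ 2 * ((B j ^ (m + 1)).mulVec (e0 j) 0) ^ 2
          ≤ (lam j) ^ 2 * ((B j ^ (m + 1)).mulVec (e0 j) 0) ^ 2
            + ((B j ^ (m + 1)).mulVec (e0 j) 1) ^ 2 :=
            le_add_of_nonneg_right (sq_nonneg _)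
        _ = ((r j) ^ 2) ^ (m + 1) * M := keym1
        _ ≤ (ρ ^ 2) ^ m * M := mul_le_mul_of_nonneg_right hpow1 hM0
    -- second component bound
    have hb1 : (lam j) ^ 2 * ((B j ^ (m + 1)).mulVec (e0 j) 1) ^ 2
        ≤ D ^ 2 * ((ρ ^ 2) ^ m * M) := by
      have hcomp : (B j ^ (m + 1)).mulVec (e0 j) 1 = -(lam j * γ j) * a 0 + β j * a 1 := by
        rw [hmv]; exact h1
      rw [hcomp]
      have hlr : (lam j * r j) ^ 2 ≤ D ^ 2 := by
        nlinarith [hD j, mul_nonneg (hlam j).le (hr0 j)]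
      -- λ²(-(λγ)a0 + βa1)² = λ²(β a1 - γ (λ a0))²·... use Cauchy
      have cauchy : ∀ u v : ℝ, (lam j) ^ 2 * (-(lam j * γ j) * u + β j * v) ^ 2
          ≤ (lam j) ^ 2 * ((β j) ^ 2 + (γ j) ^ 2)
            * ((lam j) ^ 2 * u ^ 2 + v ^ 2) := by
        intro u v
        nlinarith [sq_nonneg (lam j * (β j * (lam j * u) + γ j * v)),
          sq_nonneg (lam j)]
      have h2 : (lam j) ^ 2 * ((β j) ^ 2 + (γ j) ^ 2) = (lam j * r j) ^ 2 := by
        rw [hrsq j]; ring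
      calc (lam j) ^ 2 * (-(lam j * γ j) * a 0 + β j * a 1) ^ 2
          ≤ (lam j * r j) ^ 2 * ((lam j) ^ 2 * a 0 ^ 2 + a 1 ^ 2) := by
            rw [← h2]; exact cauchy _ _
        _ = (lam j * r j) ^ 2 * (((r j) ^ 2) ^ m * M) := by rw [keym]
        _ ≤ D ^ 2 * ((ρ ^ 2) ^ m * M) := by
            apply mul_le_mul hlr (by
              exact mul_le_mul_of_nonneg_right hpowle hM0)
              (by positivity) (by positivity)
    have hCeq : C = 2 * (ρ ^ 2) ^ m * (1 + D ^ 2) := by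
      rw [hC, hsub, pow_mul]
    rw [hCeq]
    have habs : ∀ x0 x1 : ℝ, x0 ≤ (ρ ^ 2) ^ m * M → x1 ≤ D ^ 2 * ((ρ ^ 2) ^ m * M) →
        x0 + x1 ≤ 2 * (ρ ^ 2) ^ m * (1 + D ^ 2) * M := by
      intro x0 x1 h0 h1
      nlinarith [mul_nonneg (mul_nonneg (by positivity : (0:ℝ) ≤ (ρ ^ 2) ^ m) hM0)
        (sq_nonneg D), mul_nonneg (by positivity : (0:ℝ) ≤ (ρ ^ 2) ^ m) hM0]
    exact habs _ _ hb0 hb1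
  -- sum up
  have hf0 : ∀ j, 0 ≤ (lam j) ^ 2 * (((B j) ^ (m + 1)).mulVec (e0 j) 0) ^ 2
      + (lam j) ^ 2 * (((B j) ^ (m + 1)).mulVec (e0 j) 1) ^ 2 := by
    intro j; positivity
  have hsum2 : Summable (fun j => C * ((lam j) ^ 2 * (e0 j 0) ^ 2 + (e0 j 1) ^ 2)) :=
    hsum.mul_left C
  have hfs : Summable (fun j => (lam j) ^ 2 * (((B j) ^ (m + 1)).mulVec (e0 j) 0) ^ 2
      + (lam j) ^ 2 * (((B j) ^ (m + 1)).mulVec (e0 j) 1) ^ 2) :=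
    Summable.of_nonneg_of_le hf0 hterm hsum2
  calc (∑' j, ((lam j) ^ 2 * (((B j) ^ (m + 1)).mulVec (e0 j) 0) ^ 2
        + (lam j) ^ 2 * (((B j) ^ (m + 1)).mulVec (e0 j) 1) ^ 2))
      ≤ ∑' j, C * ((lam j) ^ 2 * (e0 j 0) ^ 2 + (e0 j 1) ^ 2) :=
        Summable.tsum_le_tsum hterm hfs hsum2
    _ = C * ∑' j, ((lam j) ^ 2 * (e0 j 0) ^ 2 + (e0 j 1) ^ 2) := tsum_mul_left
end
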